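/- Suppose the prime-pair constants satisfy $S_m = \sum_{r=1}^m C_{2r} = m - (1/2)\log m + O(\log^{2/3}(m+1))$. Let $E : [0,1] \to \mathbb{R}$ be absolutely continuous with $E'$ of bounded variation, $E(0)=1$, $E(1)=0$. Then the weighted residue $R^E(1/2,\lambda) = 2\sum_{0 < 2r \le \lambda} E(2r/\lambda) C_{2r} - \lambda \int_0^1 E(\nu)\, d\nu$ satisfies $R^E(1/2,\lambda) = O(\log \lambda)$ as $\lambda \to \infty$. -/

import Mathlib

/-
Write `C r = 1 + c r`; the partial sums of `c` are the remainders `S k - k`, which the hypothesis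
makes `O(log λ)` for `k ≤ λ / 2`. The constant part `2 ∑ E (2r/λ)` is a right-endpoint Riemann sum
of `λ ∫₀¹ E` with step `2/λ`, and `E` is Lipschitz because its derivative `g`, being of bounded
variation, is bounded; so this part differs from `λ ∫₀¹ E` by `O(1)`. Summation by parts puts the
remaining part on the `O(λ)` increments of `E (2r/λ)`, each `O(1/λ)`, weighted by partial sums
`O(log λ)`.
-/

open MeasureTheory

noncomputable def twinPrimeConst : ℝ :=
  ∏' p : {p : ℕ // p.Prime ∧ 2 < p}, ((1 : ℝ) - 1 / ((p.1 : ℝ) - 1) ^ 2)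

noncomputable def primePairConst (r : ℕ) : ℝ :=
  twinPrimeConst *
    ∏ p ∈ Finset.filter (fun p => 2 < p) r.primeFactors, (((p : ℝ) - 1) / ((p : ℝ) - 2))

open Finset Set
open scoped NNReal

theorem Finset.sum_Icc_one_eq_sum_range {M : Type*} [AddCommMonoid M] (f : ℕ → M) (n : ℕ) :
    ∑ r ∈ Icc 1 n, f r = ∑ i ∈ range n, f (i + 1) := by
  rw [range_eq_Ico, sum_Ico_add' f 0 n 1]
  rfl

theorem BoundedVariationOn.norm_le {α E : Type*} [LinearOrder α] [NormedAddCommGroup E]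
    {f : α → E} {s : Set α} (hf : BoundedVariationOn f s) {a x : α} (ha : a ∈ s) (hx : x ∈ s) :
    ‖f x‖ ≤ ‖f a‖ + (eVariationOn f s).toReal := by
  have := hf.dist_le hx ha
  rw [dist_eq_norm] at this
  linarith [norm_le_norm_add_norm_sub' (f x) (f a)]

theorem lipschitzOnWith_of_eq_add_integral {E g : ℝ → ℝ} {a b : ℝ} {C : ℝ≥0}
    (hg : IntegrableOn g (Icc a b)) (hE : ∀ x ∈ Icc a b, E x = E a + ∫ t in a..x, g t)
    (hC : ∀ x ∈ Icc a b, ‖g x‖ ≤ C) :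
    LipschitzOnWith C E (Icc a b) := by
  refine LipschitzOnWith.of_dist_le_mul fun x hx y hy => ?_
  have hsub : uIoc y x ⊆ Icc a b := uIoc_subset_uIcc.trans (uIcc_subset_Icc hy hx)
  have hint : ∀ z ∈ Icc a b, IntervalIntegrable g volume a z := fun z hz =>
    (intervalIntegrable_iff.mpr (hg.mono_set (uIoc_subset_uIcc.trans
      (uIcc_subset_Icc (left_mem_Icc.mpr (hx.1.trans hx.2)) hz))))
  have hdiff : E x - E y = ∫ t in y..x, g t := by
    rw [hE x hx, hE y hy, add_sub_add_left_eq_sub,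
      intervalIntegral.integral_interval_sub_left (hint x hx) (hint y hy)]
  rw [Real.dist_eq, Real.dist_eq, hdiff, ← Real.norm_eq_abs]
  exact intervalIntegral.norm_integral_le_of_norm_le_const fun t ht => hC t (hsub ht)

theorem exists_lipschitzOnWith_of_eq_add_integral {E g : ℝ → ℝ} {a b : ℝ} (hab : a ≤ b)
    (hg : IntegrableOn g (Icc a b)) (hE : ∀ x ∈ Icc a b, E x = E a + ∫ t in a..x, g t)
    (hBV : BoundedVariationOn g (Icc a b)) :
    ∃ G : ℝ≥0, LipschitzOnWith G E (Icc a b) :=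
  ⟨⟨_, add_nonneg (norm_nonneg (g a)) ENNReal.toReal_nonneg⟩,
    lipschitzOnWith_of_eq_add_integral hg hE fun _ hx => hBV.norm_le (left_mem_Icc.mpr hab) hx⟩

theorem LipschitzOnWith.abs_le_abs_add {E : ℝ → ℝ} {G : ℝ≥0} {a b x : ℝ}
    (hE : LipschitzOnWith G E (Icc a b)) (hx : x ∈ Icc a b) : |E x| ≤ |E a| + G * (b - a) := by
  have hdist := hE.dist_le_mul x hx a (left_mem_Icc.mpr (hx.1.trans hx.2))
  rw [Real.dist_eq, Real.dist_eq, abs_of_nonneg (sub_nonneg.mpr hx.1)] at hdist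
  have : (G : ℝ) * (x - a) ≤ G * (b - a) := by gcongr; exact hx.2
  linarith [abs_sub_abs_le_abs_sub (E x) (E a)]

theorem abs_integral_sub_mul_le_of_lipschitzOnWith {E : ℝ → ℝ} {K : ℝ≥0} {a b : ℝ}
    (hab : a ≤ b) (hE : LipschitzOnWith K E (Icc a b)) :
    |(∫ x in a..b, E x) - (b - a) * E b| ≤ K * (b - a) ^ 2 := by
  have hint : IntervalIntegrable E volume a b :=
    (hE.continuousOn.mono (uIcc_of_le hab).subset).intervalIntegrable
  have hb : b ∈ Icc a b := right_mem_Icc.mpr hab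
  have hbound : ∀ x ∈ uIoc a b, ‖E x - E b‖ ≤ K * (b - a) := by
    intro x hx
    rw [uIoc_of_le hab] at hx
    have hx' : x ∈ Icc a b := Ioc_subset_Icc_self hx
    calc ‖E x - E b‖ = dist (E x) (E b) := (Real.dist_eq _ _).symm
      _ ≤ K * dist x b := hE.dist_le_mul x hx' b hb
      _ ≤ K * (b - a) := by
        rw [Real.dist_eq, abs_sub_comm, abs_of_nonneg (by linarith [hx.2])]
        gcongr
        linarith [hx.1]
  rw [← smul_eq_mul, ← intervalIntegral.integral_const,
    ← intervalIntegral.integral_sub hint intervalIntegrable_const, ← Real.norm_eq_abs]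
  calc _ ≤ K * (b - a) * |b - a| := intervalIntegral.norm_integral_le_of_norm_le_const hbound
    _ = K * (b - a) ^ 2 := by rw [abs_of_nonneg (sub_nonneg.mpr hab)]; ring

theorem abs_mul_sum_sub_integral_le_of_lipschitzOnWith {E : ℝ → ℝ} {K : ℝ≥0} {M h : ℝ} {n : ℕ}
    (hE : LipschitzOnWith K E (Icc 0 1)) (hM : ∀ x ∈ Icc (0 : ℝ) 1, |E x| ≤ M) (hh : 0 < h)
    (hnh : n * h ≤ 1) (hnh' : 1 ≤ (n + 1) * h) :
    |h * ∑ i ∈ range n, E ((i + 1) * h) - ∫ x in (0 : ℝ)..1, E x| ≤ (K + M) * h := by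
  set x : ℕ → ℝ := fun i => i * h with hx_def
  have hx : ∀ i ≤ n, x i ∈ Icc (0 : ℝ) 1 := fun i hi =>
    ⟨by positivity, (mul_le_mul_of_nonneg_right (by exact_mod_cast hi) hh.le).trans hnh⟩
  have hint : ∀ y ∈ Icc (0 : ℝ) 1, ∀ z ∈ Icc (0 : ℝ) 1, IntervalIntegrable E volume y z :=
    fun y hy z hz => (hE.continuousOn.mono (uIcc_subset_Icc hy hz)).intervalIntegrable
  have hsplit : ∫ y in (0 : ℝ)..1, E y =
      ∑ i ∈ range n, (∫ y in x i..x (i + 1), E y) + ∫ y in x n..1, E y := by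
    rw [intervalIntegral.sum_integral_adjacent_intervals fun i hi =>
        hint _ (hx i hi.le) _ (hx (i + 1) hi),
      intervalIntegral.integral_add_adjacent_intervals
        (hint _ (hx 0 (Nat.zero_le _)) _ (hx n le_rfl))
        (hint _ (hx n le_rfl) _ ⟨zero_le_one, le_rfl⟩)]
    simp [hx_def]
  have hcell : ∀ i ∈ range n,
      |(∫ y in x i..x (i + 1), E y) - h * E ((i + 1) * h)| ≤ K * h ^ 2 := by
    intro i hi
    have hi := mem_range.mp hi
    have hstep : x (i + 1) - x i = h := by simp only [hx_def]; push_cast; ring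
    have hcell := abs_integral_sub_mul_le_of_lipschitzOnWith (by linarith)
      (hE.mono (Icc_subset_Icc (hx i hi.le).1 (hx (i + 1) hi).2))
    rw [hstep] at hcell
    rwa [show ((i : ℝ) + 1) * h = x (i + 1) by simp [hx_def]]
  have htail : |∫ y in x n..1, E y| ≤ M * h := by
    have hxn := hx n le_rfl
    rw [← Real.norm_eq_abs]
    refine (intervalIntegral.norm_integral_le_of_norm_le_const (C := M) fun y hy => ?_).trans ?_
    · rw [uIoc_of_le hxn.2] at hy
      exact hM y ⟨hxn.1.trans hy.1.le, hy.2⟩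
    · rw [abs_of_nonneg (sub_nonneg.mpr hxn.2)]
      have hM0 : 0 ≤ M := (abs_nonneg _).trans (hM 0 ⟨le_rfl, zero_le_one⟩)
      gcongr
      linarith
  have hcells : (n : ℝ) * (K * h ^ 2) ≤ K * h := by
    calc (n : ℝ) * (K * h ^ 2) = K * h * (n * h) := by ring
      _ ≤ K * h * 1 := by gcongr
      _ = K * h := mul_one _
  calc |h * ∑ i ∈ range n, E ((i + 1) * h) - ∫ x in (0 : ℝ)..1, E x|
      = |∑ i ∈ range n, ((∫ y in x i..x (i + 1), E y) - h * E ((i + 1) * h))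
          + ∫ y in x n..1, E y| := by
        rw [hsplit, sum_sub_distrib, mul_sum, ← abs_neg]
        ring_nf
    _ ≤ ∑ i ∈ range n, |(∫ y in x i..x (i + 1), E y) - h * E ((i + 1) * h)|
          + |∫ y in x n..1, E y| := (abs_add_le _ _).trans (by gcongr; exact abs_sum_le_sum_abs _ _)
    _ ≤ n * (K * h ^ 2) + M * h := by
        gcongr
        exact (sum_le_sum hcell).trans_eq (by simp)
    _ ≤ (K + M) * h := by linarith

theorem abs_sum_mul_le_of_abs_sum_range_le (f c : ℕ → ℝ) {n : ℕ} (hn : 0 < n) {M δ B : ℝ}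
    (hδ : 0 ≤ δ) (hf : ∀ i < n, |f i| ≤ M) (hdf : ∀ i, i + 1 < n → |f (i + 1) - f i| ≤ δ)
    (hc : ∀ k ≤ n, |∑ i ∈ range k, c i| ≤ B) :
    |∑ i ∈ range n, f i * c i| ≤ (M + n * δ) * B := by
  have hB : 0 ≤ B := by simpa using hc 0 (Nat.zero_le _)
  have hM : 0 ≤ M := (abs_nonneg _).trans (hf 0 hn)
  have hterm : ∀ i ∈ range (n - 1),
      |(f (i + 1) - f i) * ∑ j ∈ range (i + 1), c j| ≤ δ * B := by
    intro i hi
    have hi := mem_range.mp hi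
    rw [abs_mul]
    exact mul_le_mul (hdf i (by omega)) (hc _ (by omega)) (abs_nonneg _) hδ
  have hparts := sum_range_by_parts f c n
  simp only [smul_eq_mul] at hparts
  rw [hparts]
  calc _ ≤ |f (n - 1) * ∑ j ∈ range n, c j|
        + |∑ i ∈ range (n - 1), (f (i + 1) - f i) * ∑ j ∈ range (i + 1), c j| := abs_sub _ _
    _ ≤ M * B + (n - 1 : ℕ) * (δ * B) := by
        rw [abs_mul]
        exact add_le_add (mul_le_mul (hf _ (by omega)) (hc n le_rfl) (abs_nonneg _) hM)
          ((abs_sum_le_sum_abs _ _).trans ((sum_le_sum hterm).trans_eq (by simp)))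
    _ ≤ (M + n * δ) * B := by
        have : ((n - 1 : ℕ) : ℝ) ≤ n := by exact_mod_cast Nat.sub_le n 1
        nlinarith [mul_nonneg hδ hB]

theorem abs_sub_le_mul_log_of_abs_sub_le {s K : ℝ} {m : ℕ} (hm : 1 ≤ m)
    (hs : |s - ((m : ℝ) - (1 / 2) * Real.log m)| ≤ K * (Real.log ((m : ℝ) + 1)) ^ ((2 : ℝ) / 3)) :
    |s - m| ≤ (1 / 2 + |K| * (1 + (Real.log 2)⁻¹)) * Real.log ((m : ℝ) + 1) := by
  set y := Real.log ((m : ℝ) + 1)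
  have hm' : (1 : ℝ) ≤ m := by exact_mod_cast hm
  have hlog2 : 0 < Real.log 2 := Real.log_pos one_lt_two
  have hy : Real.log 2 ≤ y := Real.log_le_log two_pos (by linarith)
  have hlogm : Real.log m ≤ y := Real.log_le_log (by linarith) (by linarith)
  have hlogm0 : 0 ≤ Real.log m := Real.log_nonneg hm'
  have hpow : y ^ ((2 : ℝ) / 3) ≤ 1 + y := by
    have := rpow_one_add_le_one_add_mul_self (s := y - 1) (by linarith) (p := 2 / 3)
      (by norm_num) (by norm_num)
    rw [add_sub_cancel] at this
    linarith
  have hone : 1 ≤ y * (Real.log 2)⁻¹ := by rwa [le_mul_inv_iff₀ hlog2, one_mul]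
  calc |s - m| ≤ |s - ((m : ℝ) - (1 / 2) * Real.log m)| + |(m - (1 / 2) * Real.log m) - m| :=
        abs_sub_le _ _ _
    _ = |s - ((m : ℝ) - (1 / 2) * Real.log m)| + (1 / 2) * Real.log m := by
        rw [sub_sub_cancel_left, abs_neg, abs_of_nonneg (mul_nonneg (by norm_num) hlogm0)]
    _ ≤ |K| * (1 + y) + (1 / 2) * y := by
        gcongr
        exact hs.trans ((mul_le_mul_of_nonneg_right (le_abs_self K)
          (Real.rpow_nonneg (hlog2.le.trans hy) _)).trans (by gcongr))
    _ ≤ |K| * (y * (Real.log 2)⁻¹ + y) + (1 / 2) * y := by gcongr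
    _ = (1 / 2 + |K| * (1 + (Real.log 2)⁻¹)) * y := by ring

theorem abs_sum_range_sub_one_le_mul_log (C : ℕ → ℝ) {K : ℝ}
    (hC : ∀ m : ℕ, 1 ≤ m →
      |(∑ r ∈ Icc 1 m, C r) - ((m : ℝ) - (1 / 2) * Real.log m)|
        ≤ K * (Real.log ((m : ℝ) + 1)) ^ ((2 : ℝ) / 3)) (k : ℕ) :
    |∑ i ∈ range k, (C (i + 1) - 1)|
      ≤ (1 / 2 + |K| * (1 + (Real.log 2)⁻¹)) * Real.log ((k : ℝ) + 1) := by
  rcases Nat.eq_zero_or_pos k with rfl | hk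
  · simp
  have hsum : ∑ i ∈ range k, (C (i + 1) - 1) = (∑ r ∈ Icc 1 k, C r) - k := by
    simp [sum_Icc_one_eq_sum_range, sum_sub_distrib]
  rw [hsum]
  exact abs_sub_le_mul_log_of_abs_sub_le hk (hC k hk)

theorem natFloor_half_mul_two_div_le_one {lam : ℝ} (hlam : 0 < lam) :
    (⌊lam / 2⌋₊ : ℝ) * (2 / lam) ≤ 1 := by
  rw [mul_div_assoc', div_le_one hlam]
  linarith [Nat.floor_le (by positivity : 0 ≤ lam / 2)]

theorem one_le_natFloor_half_add_one_mul_two_div {lam : ℝ} (hlam : 0 < lam) :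
    1 ≤ ((⌊lam / 2⌋₊ : ℝ) + 1) * (2 / lam) := by
  rw [mul_div_assoc', le_div_iff₀ hlam]
  linarith [Nat.lt_floor_add_one (lam / 2)]

theorem abs_two_mul_sum_sub_integral_le {E : ℝ → ℝ} {C : ℕ → ℝ} {G : ℝ≥0} {M B lam : ℝ}
    (hE : LipschitzOnWith G E (Icc 0 1)) (hM : ∀ x ∈ Icc (0 : ℝ) 1, |E x| ≤ M) (hlam : 2 ≤ lam)
    (hC : ∀ k ≤ ⌊lam / 2⌋₊, |∑ i ∈ range k, (C (i + 1) - 1)| ≤ B) :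
    |2 * (∑ r ∈ Icc 1 ⌊lam / 2⌋₊, E (2 * r / lam) * C r) - lam * ∫ ν in (0 : ℝ)..1, E ν|
      ≤ 2 * (G + M) * (1 + B) := by
  set m := ⌊lam / 2⌋₊
  set h := 2 / lam
  have hlam0 : 0 < lam := by linarith
  have hh : 0 < h := by positivity
  have hm : 0 < m := Nat.floor_pos.mpr (by linarith)
  have hlamh : lam * h = 2 := mul_div_cancel₀ 2 hlam0.ne'
  have hmh : m * h ≤ 1 := natFloor_half_mul_two_div_le_one hlam0
  have hmh' : 1 ≤ (m + 1) * h := one_le_natFloor_half_add_one_mul_two_div hlam0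
  have hmem : ∀ i < m, ((i : ℝ) + 1) * h ∈ Icc (0 : ℝ) 1 := fun i hi =>
    ⟨by positivity, (mul_le_mul_of_nonneg_right (by exact_mod_cast hi) hh.le).trans hmh⟩
  set f : ℕ → ℝ := fun i => E ((i + 1) * h)
  set c : ℕ → ℝ := fun i => C (i + 1) - 1
  have hsum : ∑ r ∈ Icc 1 m, E (2 * r / lam) * C r =
      ∑ i ∈ range m, f i + ∑ i ∈ range m, f i * c i := by
    rw [sum_Icc_one_eq_sum_range, ← sum_add_distrib]
    refine sum_congr rfl fun i _ => ?_
    simp only [f, c, h]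
    push_cast
    ring_nf
  have hRiemann := abs_mul_sum_sub_integral_le_of_lipschitzOnWith hE hM hh hmh hmh'
  have hAbel : |∑ i ∈ range m, f i * c i| ≤ (M + m * (G * h)) * B := by
    refine abs_sum_mul_le_of_abs_sum_range_le f c hm (by positivity)
      (fun i hi => hM _ (hmem i hi)) (fun i hi => ?_) hC
    have := hE.dist_le_mul _ (hmem (i + 1) hi) _ (hmem i (by omega))
    rw [Real.dist_eq, Real.dist_eq, ← sub_mul, Nat.cast_succ, add_sub_cancel_left,
      one_mul, abs_of_pos hh] at this
    simpa only [f, Nat.cast_succ] using this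
  have hGh : (m : ℝ) * (G * h) ≤ G := by nlinarith [G.coe_nonneg]
  rw [hsum]
  calc |2 * (∑ i ∈ range m, f i + ∑ i ∈ range m, f i * c i) - lam * ∫ ν in (0 : ℝ)..1, E ν|
      = |lam * (h * ∑ i ∈ range m, f i - ∫ ν in (0 : ℝ)..1, E ν)
          + 2 * ∑ i ∈ range m, f i * c i| := by
        rw [mul_sub, ← mul_assoc, hlamh]
        ring_nf
    _ ≤ lam * ((G + M) * h) + 2 * ((M + m * (G * h)) * B) := by
        refine (abs_add_le _ _).trans ?_
        rw [abs_mul, abs_mul, abs_of_pos hlam0, abs_two]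
        gcongr
    _ = 2 * (G + M) + 2 * ((M + m * (G * h)) * B) := by
        rw [show lam * ((G + M) * h) = (G + M) * (lam * h) by ring, hlamh, mul_comm]
    _ ≤ 2 * (G + M) * (1 + B) := by
        have hB : 0 ≤ B := by simpa using hC 0 (Nat.zero_le _)
        nlinarith

theorem stmt_14_general
    (hS : ∃ K : ℝ, ∀ m : ℕ, 1 ≤ m →
      |(∑ r ∈ Finset.Icc 1 m, primePairConst r) - ((m : ℝ) - (1 / 2) * Real.log m)|
        ≤ K * (Real.log ((m : ℝ) + 1)) ^ ((2 : ℝ) / 3))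
    (E g : ℝ → ℝ)
    (hg : MeasureTheory.IntegrableOn g (Set.Icc 0 1))
    (hAC : ∀ x ∈ Set.Icc (0 : ℝ) 1, E x = E 0 + ∫ t in (0 : ℝ)..x, g t)
    (hBV : BoundedVariationOn g (Set.Icc 0 1)) :
    ∃ K' : ℝ, ∀ lam : ℝ, 2 ≤ lam →
      |2 * (∑ r ∈ Finset.Icc 1 ⌊lam / 2⌋₊, E (2 * r / lam) * primePairConst r)
          - lam * ∫ ν in (0 : ℝ)..1, E ν|
        ≤ K' * Real.log lam := by
  obtain ⟨K, hK⟩ := hS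
  obtain ⟨G, hLip⟩ := exists_lipschitzOnWith_of_eq_add_integral zero_le_one hg hAC hBV
  set M := |E 0| + G * (1 - 0)
  set A := 1 / 2 + |K| * (1 + (Real.log 2)⁻¹)
  have hA : 0 ≤ A := by positivity
  refine ⟨2 * (G + M) * ((Real.log 2)⁻¹ + A), fun lam hlam => ?_⟩
  have hlog2 : 0 < Real.log 2 := Real.log_pos one_lt_two
  have hone : 1 ≤ (Real.log 2)⁻¹ * Real.log lam := by
    rw [← div_eq_inv_mul, one_le_div hlog2]
    exact Real.log_le_log two_pos hlam
  have hC : ∀ k ≤ ⌊lam / 2⌋₊,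
      |∑ i ∈ range k, (primePairConst (i + 1) - 1)| ≤ A * Real.log lam := fun k hk => by
    refine (abs_sum_range_sub_one_le_mul_log _ hK k).trans (mul_le_mul_of_nonneg_left
      (Real.log_le_log (by positivity) ?_) hA)
    linarith [(Nat.cast_le.mpr hk).trans (Nat.floor_le (by positivity : 0 ≤ lam / 2))]
  refine (abs_two_mul_sum_sub_integral_le hLip (fun _ hx => hLip.abs_le_abs_add hx) hlam
    hC).trans ?_
  have hGM : 0 ≤ (G : ℝ) + M := by positivity
  nlinarith

theorem stmt_14
    (hS : ∃ K : ℝ, ∀ m : ℕ, 1 ≤ m →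
      |(∑ r ∈ Finset.Icc 1 m, primePairConst r) - ((m : ℝ) - (1 / 2) * Real.log m)|
        ≤ K * (Real.log ((m : ℝ) + 1)) ^ ((2 : ℝ) / 3))
    (E g : ℝ → ℝ)
    (hg : MeasureTheory.IntegrableOn g (Set.Icc 0 1))
    (hAC : ∀ x ∈ Set.Icc (0 : ℝ) 1, E x = E 0 + ∫ t in (0 : ℝ)..x, g t)
    (hBV : BoundedVariationOn g (Set.Icc 0 1))
    (hE0 : E 0 = 1) (hE1 : E 1 = 0) :
    ∃ K' : ℝ, ∀ lam : ℝ, 2 ≤ lam →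
      |2 * (∑ r ∈ Finset.Icc 1 ⌊lam / 2⌋₊, E (2 * r / lam) * primePairConst r)
          - lam * ∫ ν in (0 : ℝ)..1, E ν|
        ≤ K' * Real.log lam :=
  stmt_14_general hS E g hg hAC hBV
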